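/- Let (K, O, k) be a p-modular system with k algebraically closed, and let σ ∈ Gal(K/Q_p) fix a uniformizer π of O and induce a positive power of Frobenius on k = O/(π). Then the inclusion O^⟨σ⟩/π·O^⟨σ⟩ ⊆ k^⟨σ̄⟩ is an equality, where σ̄ denotes the induced automorphism on k; in particular (K^⟨σ⟩, O^⟨σ⟩, k^⟨σ̄⟩) is a p-modular system with finite residue field. -/

import Mathlib

open IsLocalRing Polynomial

/-! Since `π` is fixed by `σ`, the additive map `σ - id` commutes with multiplication by `π`;
on the residue field it is `x ↦ x ^ q - x`, which is surjective because `k` is algebraically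
closed. Successive approximation in the `π`-adically complete ring `O` then makes `σ - id`
surjective on `O`. If `z ^ q = z` and `a` lifts `z`, then `σ a - a = π c`; choosing `t` with
`σ t - t = -c`, the element `a + π t` is `σ`-fixed and still lifts `z`. Finiteness holds because
the fixed points of `z ↦ z ^ q` are roots of `X ^ q - X`. -/

theorem RingHom.surjective_sub_self_of_isAdicComplete {R : Type*} [CommRing R] {π : R}
    [IsAdicComplete (Ideal.span {π}) R] (f : R →+* R) (hfπ : f π = π)
    (h : ∀ c, ∃ s, f s - s - c ∈ Ideal.span {π}) :
    Function.Surjective fun x ↦ f x - x := by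
  -- `f - id` is linear over the fixed subring, which contains `π`.
  let A := f.eqLocus (RingHom.id R)
  let δ : R →ₗ[A] R :=
    { toFun := fun x ↦ f x - x
      map_add' := fun x y ↦ by simp only [map_add]; ring
      map_smul' := fun a x ↦ by
        simp only [Subring.smul_def, smul_eq_mul, map_mul, RingHom.id_apply]
        rw [show f a = a from a.2]
        ring }
  let I : Ideal A := Ideal.span {⟨π, hfπ⟩}
  have hI : I.map (algebraMap A R) = Ideal.span {π} := by simp [I, Ideal.map_span]; rfl
  have : IsAdicComplete I R := (IsAdicComplete.map_algebraMap_iff I R).mp (by rwa [hI])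
  have hsmul : (I • ⊤ : Submodule A R) = (Ideal.span {π}).restrictScalars A := by
    rw [Ideal.smul_top_eq_map, hI]
  refine surjective_of_mkQ_comp_surjective (I := I) (f := δ) fun y ↦ ?_
  obtain ⟨c, rfl⟩ := Submodule.Quotient.mk_surjective _ y
  obtain ⟨s, hs⟩ := h c
  exact ⟨s, (Submodule.Quotient.eq _).mpr (by rw [hsmul]; exact hs)⟩

theorem IsAlgClosed.exists_pow_sub_self_eq {k : Type*} [Field k] [IsAlgClosed k] {q : ℕ}
    (hq : 1 < q) (c : k) : ∃ r : k, r ^ q - r = c := by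
  have hdeg : 0 < (X ^ q - X - C c : k[X]).natDegree := by
    rw [natDegree_sub_C, FiniteField.X_pow_card_sub_X_natDegree_eq k hq]; omega
  obtain ⟨r, hr⟩ := IsAlgClosed.exists_root (X ^ q - X - C c)
    (natDegree_pos_iff_degree_pos.mp hdeg).ne'
  exact ⟨r, by simpa [sub_eq_zero] using hr⟩

theorem finite_setOf_pow_eq_self {k : Type*} [Field k] {q : ℕ} (hq : 1 < q) :
    {z : k | z ^ q = z}.Finite :=
  (finite_setOfPred_isRoot (FiniteField.X_pow_card_sub_X_ne_zero k hq)).subset fun z hz ↦ by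
    simp [hz.out]

theorem stmt_3_general (p : ℕ) [Fact p.Prime]
    (O : Type*) [CommRing O] [IsDomain O] [IsDiscreteValuationRing O]
    [IsAdicComplete (maximalIdeal O) O]
    [IsAlgClosed (ResidueField O)]
    (π : O) (hπ : Irreducible π)
    (σO : O ≃+* O)
    (hσπ : σO π = π)
    (n : ℕ) (hn : 1 ≤ n) (q : ℕ) (hq : q = p ^ n)
    (hσres : ∀ x : O, residue O (σO x) = residue O x ^ q) :
    (∀ z : ResidueField O, z ^ q = z →
        ∃ y : O, σO y = y ∧ residue O y = z) ∧
      Finite {z : ResidueField O // z ^ q = z} := by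
  have hq1 : 1 < q := hq ▸ Nat.one_lt_pow (by omega) (Fact.out : p.Prime).one_lt
  have hmax : maximalIdeal O = Ideal.span {π} :=
    (IsDiscreteValuationRing.irreducible_iff_uniformizer π).mp hπ
  have : IsAdicComplete (Ideal.span {π}) O := hmax ▸ inferInstance
  have residue_eq_iff {x y : O} : residue O x = residue O y ↔ x - y ∈ Ideal.span {π} :=
    hmax ▸ Ideal.Quotient.eq
  have hsurj : Function.Surjective fun x ↦ σO x - x :=
    RingHom.surjective_sub_self_of_isAdicComplete (σO : O →+* O) hσπ fun c ↦ by
      obtain ⟨r, hr⟩ := IsAlgClosed.exists_pow_sub_self_eq hq1 (residue O c)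
      obtain ⟨s, rfl⟩ := residue_surjective r
      exact ⟨s, residue_eq_iff.mp (by simp [hσres, hr])⟩
  refine ⟨fun z hz ↦ ?_, (finite_setOf_pow_eq_self hq1).to_subtype⟩
  obtain ⟨a, rfl⟩ := residue_surjective z
  have ha : σO a - a ∈ Ideal.span {π} := residue_eq_iff.mp (by rw [hσres, hz])
  obtain ⟨c, hc⟩ := Ideal.mem_span_singleton'.mp ha
  obtain ⟨t, ht⟩ := hsurj (-c)
  refine ⟨a + π * t, ?_, ?_⟩
  · rw [map_add, map_mul, hσπ]
    linear_combination -hc + π * ht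
  · simp [(residue_eq_zero_iff π).mpr (hmax ▸ Ideal.mem_span_singleton_self π)]

/-- The inclusion `O^⟨σ⟩/π·O^⟨σ⟩ ⊆ k^⟨σ̄⟩` is an equality: every element of the residue
field fixed by the induced automorphism `σ̄ = (x ↦ x^q)` lifts to a `σ`-fixed element of `O`;
moreover the fixed subfield `k^⟨σ̄⟩` is finite. -/
theorem stmt_3 (p : ℕ) [Fact p.Prime]
    (O : Type*) [CommRing O] [IsDomain O] [IsDiscreteValuationRing O]
    [IsAdicComplete (maximalIdeal O) O]
    (K : Type*) [Field K] [Algebra O K] [IsFractionRing O K] [CharZero K]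
    [IsAlgClosed (ResidueField O)] [CharP (ResidueField O) p]
    (π : O) (hπ : Irreducible π)
    (σ : K ≃+* K) (hσO : ∀ x : O, ∃ y : O, σ (algebraMap O K x) = algebraMap O K y)
    (σO : O ≃+* O) (hσσO : ∀ x : O, algebraMap O K (σO x) = σ (algebraMap O K x))
    (hσπ : σO π = π)
    (n : ℕ) (hn : 1 ≤ n) (q : ℕ) (hq : q = p ^ n)
    (hσres : ∀ x : O, residue O (σO x) = residue O x ^ q) :
    (∀ z : ResidueField O, z ^ q = z →
        ∃ y : O, σO y = y ∧ residue O y = z) ∧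
      Finite {z : ResidueField O // z ^ q = z} :=
  stmt_3_general p O π hπ σO hσπ n hn q hq hσres
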